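/- Let φ(u) = Σ_{i=1}^m d_i (x̂*_i e^{u_i} − x̂_{0,i} u_i) with d_i > 0 and x̂^*, x̂_0 ∈ R^m_{>0}, and let U ⊆ R^m be a linear subspace. Then there exists a unique μ ∈ U such that the gradient ∇φ(μ) = D_1(x̂^*·Exp(μ) − x̂_0) is orthogonal to U (equivalently, lies in the orthogonal complement of U). -/

import Mathlib

/-!
`φ` is a sum of coercive one-variable functions, so its restriction to the closed subspace `U`
attains a minimum, where its derivative vanishes in every direction of `U`. Each coordinate of
`∇φ` is strictly increasing, so `⟨∇φ(ν) - ∇φ(μ), ν - μ⟩ > 0` whenever `ν ≠ μ`; two critical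
points `μ, ν ∈ U` would make this pairing zero, since `ν - μ ∈ U`.
-/

open Filter Topology

theorem tendsto_mul_exp_sub_mul_cocompact {a b : ℝ} (ha : 0 < a) (hb : 0 < b) :
    Tendsto (fun t => a * Real.exp t - b * t) (cocompact ℝ) atTop := by
  rw [cocompact_eq_atBot_atTop, tendsto_sup]
  constructor
  · refine tendsto_atTop_mono (fun t => ?_) (tendsto_neg_atBot_atTop.const_mul_atTop hb)
    nlinarith [Real.exp_pos t]
  · -- `a e^t - b t = e^t (a - b t e^{-t})` and `t e^{-t} → 0`
    have h : Tendsto (fun t => a - b * (t * Real.exp (-t))) atTop (𝓝 (a - b * 0)) :=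
      ((Real.tendsto_pow_mul_exp_neg_atTop_nhds_zero 1).congr (fun t => by simp)).const_mul b
        |>.const_sub a
    refine (Real.tendsto_exp_atTop.atTop_mul_pos (by simpa using ha) h).congr fun t => ?_
    rw [mul_sub, Real.exp_neg]
    field_simp

theorem tendsto_sum_apply_cocompact {ι : Type*} [Fintype ι] {X : ι → Type*}
    [∀ i, TopologicalSpace (X i)] [∀ i, Nonempty (X i)] {g : ∀ i, X i → ℝ}
    (hg : ∀ i, Continuous (g i)) (hcoer : ∀ i, Tendsto (g i) (cocompact (X i)) atTop) :
    Tendsto (fun x => ∑ i, g i (x i)) (cocompact (∀ i, X i)) atTop := by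
  choose y hy using fun i => (hg i).exists_forall_le (hcoer i)
  rw [← coprodᵢ_cocompact, Filter.coprodᵢ, tendsto_iSup]
  intro i
  have hbound : ∀ x : ∀ i, X i, g i (x i) - g i (y i) + ∑ j, g j (y j) ≤ ∑ j, g j (x j) := by
    intro x
    have : g i (x i) - g i (y i) ≤ ∑ j, (g j (x j) - g j (y j)) :=
      Finset.single_le_sum (f := fun j => g j (x j) - g j (y j))
        (fun j _ => sub_nonneg.2 (hy j (x j))) (Finset.mem_univ i)
    rw [Finset.sum_sub_distrib] at this
    linarith
  refine tendsto_atTop_mono hbound ?_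
  exact tendsto_atTop_add_const_right _ _ <| tendsto_atTop_add_const_right _ _ <|
    (hcoer i).comp tendsto_comap

theorem hasFDerivAt_sum_apply {ι : Type*} [Fintype ι] {g g' : ι → ℝ → ℝ} {x : ι → ℝ}
    (hg : ∀ i, HasDerivAt (g i) (g' i (x i)) (x i)) :
    HasFDerivAt (fun u : ι → ℝ => ∑ i, g i (u i))
      (∑ i, g' i (x i) • ContinuousLinearMap.proj (R := ℝ) (φ := fun _ : ι => ℝ) i) x :=
  HasFDerivAt.fun_sum fun i _ => (hg i).comp_hasFDerivAt x (hasFDerivAt_apply i x)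

theorem IsMinOn.hasFDerivAt_eq_zero_of_mem_submodule {E : Type*} [NormedAddCommGroup E]
    [NormedSpace ℝ E] {f : E → ℝ} {f' : E →L[ℝ] ℝ} {U : Submodule ℝ E} {x w : E}
    (hmin : IsMinOn f U x) (hx : x ∈ U) (hf : HasFDerivAt f f' x) (hw : w ∈ U) : f' w = 0 := by
  have hline : HasDerivAt (fun t : ℝ => f (x + t • w)) (f' w) 0 := by
    have : HasDerivAt (fun t : ℝ => x + t • w) w 0 := by
      simpa using ((hasDerivAt_id (0 : ℝ)).smul_const w).const_add x
    exact hf.comp_hasDerivAt_of_eq 0 this (by simp)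
  refine IsLocalMin.hasDerivAt_eq_zero (Eventually.of_forall fun t => ?_) hline
  simpa using hmin (U.add_mem hx (U.smul_mem t hw))

theorem StrictMono.sub_mul_sub_pos {α : Type*} [Ring α] [LinearOrder α] [IsStrictOrderedRing α]
    {h : α → α} (hh : StrictMono h) {a b : α} (hab : a ≠ b) : 0 < (h a - h b) * (a - b) := by
  rcases hab.lt_or_gt with hlt | hlt
  · exact mul_pos_of_neg_of_neg (sub_neg.2 (hh hlt)) (sub_neg.2 hlt)
  · exact mul_pos (sub_pos.2 (hh hlt)) (sub_pos.2 hlt)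

theorem eq_of_sum_sub_mul_sub_eq_zero {ι α : Type*} [Fintype ι] [Ring α] [LinearOrder α]
    [IsStrictOrderedRing α] {h : ι → α → α} (hh : ∀ i, StrictMono (h i)) {x y : ι → α}
    (hsum : ∑ i, (h i (x i) - h i (y i)) * (x i - y i) = 0) : x = y := by
  have hnonneg : ∀ i ∈ Finset.univ, 0 ≤ (h i (x i) - h i (y i)) * (x i - y i) := by
    intro i _
    by_cases hi : x i = y i
    · simp [hi]
    · exact ((hh i).sub_mul_sub_pos hi).le
  funext i
  by_contra hi
  exact ((hh i).sub_mul_sub_pos hi).ne' <|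
    (Finset.sum_eq_zero_iff_of_nonneg hnonneg).1 hsum i (Finset.mem_univ i)

theorem existsUnique_mem_forall_sum_mul_eq_zero {ι : Type*} [Fintype ι] {g g' : ι → ℝ → ℝ}
    (hg : ∀ i t, HasDerivAt (g i) (g' i t) t) (hg' : ∀ i, StrictMono (g' i))
    (hcoer : ∀ i, Tendsto (g i) (cocompact ℝ) atTop) (U : Submodule ℝ (ι → ℝ)) :
    ∃! μ : ι → ℝ, μ ∈ U ∧ ∀ w ∈ U, ∑ i, g' i (μ i) * w i = 0 := by
  have hgc : ∀ i, Continuous (g i) := fun i =>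
    continuous_iff_continuousAt.2 fun t => (hg i t).continuousAt
  set φ : (ι → ℝ) → ℝ := fun u => ∑ i, g i (u i)
  have hφ : Continuous φ := continuous_finsetSum _ fun i _ => (hgc i).comp (continuous_apply i)
  obtain ⟨μ, hμU, hmin⟩ : ∃ μ ∈ U, IsMinOn φ U μ :=
    hφ.continuousOn.exists_isMinOn' U.closed_of_finiteDimensional U.zero_mem
      ((tendsto_sum_apply_cocompact hgc hcoer).eventually_ge_atTop (φ 0)
        |>.filter_mono inf_le_left)
  have hcrit : ∀ w ∈ U, ∑ i, g' i (μ i) * w i = 0 := fun w hw => by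
    simpa [mul_comm] using
      hmin.hasFDerivAt_eq_zero_of_mem_submodule hμU (hasFDerivAt_sum_apply fun i => hg i _) hw
  refine ⟨μ, ⟨hμU, hcrit⟩, fun ν ⟨hνU, hν⟩ => eq_of_sum_sub_mul_sub_eq_zero hg' ?_⟩
  have hsub := U.sub_mem hνU hμU
  calc ∑ i, (g' i (ν i) - g' i (μ i)) * (ν i - μ i)
      = ∑ i, g' i (ν i) * (ν - μ) i - ∑ i, g' i (μ i) * (ν - μ) i := by
        rw [← Finset.sum_sub_distrib]; simp only [Pi.sub_apply, sub_mul]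
    _ = 0 := by rw [hν _ hsub, hcrit _ hsub, sub_self]

theorem phi_unique_critical_point_on_subspace_general
    (m : ℕ) (xs x0 d : Fin m → ℝ)
    (hxs : ∀ i, 0 < xs i) (hx0 : ∀ i, 0 < x0 i) (hd : ∀ i, 0 < d i)
    (U : Submodule ℝ (Fin m → ℝ)) :
    ∃! μ : Fin m → ℝ, μ ∈ U ∧
      ∀ w ∈ U, ∑ i, (d i * (xs i * Real.exp (μ i) - x0 i)) * w i = 0 := by
  refine existsUnique_mem_forall_sum_mul_eq_zero
    (g := fun i t => d i * xs i * Real.exp t - d i * x0 i * t)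
    (g' := fun i t => d i * (xs i * Real.exp t - x0 i)) (fun i t => ?_) (fun i => ?_)
    (fun i => tendsto_mul_exp_sub_mul_cocompact (mul_pos (hd i) (hxs i)) (mul_pos (hd i) (hx0 i)))
    U
  · exact (((Real.hasDerivAt_exp t).const_mul _).sub ((hasDerivAt_id' t).const_mul _)).congr_deriv
      (by ring)
  · exact fun s t hst => mul_lt_mul_of_pos_left
      (sub_lt_sub_right (mul_lt_mul_of_pos_left (Real.exp_lt_exp.2 hst) (hxs i)) _) (hd i)

/-- For `φ(u) = ∑ᵢ dᵢ (x̂*ᵢ e^{uᵢ} − x̂₀ᵢ uᵢ)` and a linear subspace `U ⊆ ℝᵐ`,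
there is a unique `μ ∈ U` such that the gradient
`∇φ(μ) = D₁(x̂*·Exp(μ) − x̂₀)` is orthogonal to `U`. -/
theorem phi_unique_critical_point_on_subspace
    (m : ℕ) (hm : 1 ≤ m) (xs x0 d : Fin m → ℝ)
    (hxs : ∀ i, 0 < xs i) (hx0 : ∀ i, 0 < x0 i) (hd : ∀ i, 0 < d i)
    (U : Submodule ℝ (Fin m → ℝ)) :
    ∃! μ : Fin m → ℝ, μ ∈ U ∧
      ∀ w ∈ U, ∑ i, (d i * (xs i * Real.exp (μ i) - x0 i)) * w i = 0 :=
  phi_unique_critical_point_on_subspace_general m xs x0 d hxs hx0 hd U
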